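/- arXiv:0711.4450 — 2 statements merged into one kernel-verified Lean document; each statement's English description precedes it below -/
import Mathlib

section
/- Let S be a commutative ring equipped with a ring involution x ↦ x̄. Let c, d ∈ S with d a unit, d̄ a unit, and c·c̄ = d + d̄. Then the following 3×3 matrix identity holds: diag(-d, d̄/d, -1/d̄) = U₁ · L · U₂ · w, where U₁ = [[1,-c,-d],[0,1,c̄],[0,0,1]], L = [[1,0,0],[c̄/d̄,1,0],[-1/d̄,-c/d,1]], U₂ = [[1,-c·d̄/d,-d],[0,1,c̄·d/d̄],[0,0,1]], and w = [[0,0,1],[0,-1,0],[1,0,0]]. -/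
/-- Pappas–Rapoport identity (9.13): over a commutative ring with involution `σ`, with units
`d`, `e = σ d` and `c·σ(c) = d + σ(d)`, the torus element `diag(-d, d̄/d, -1/d̄)` factors as
`U₁ · L · U₂ · w`. -/
theorem su3_torus_factorization (S : Type*) [CommRing S] (σ : S ≃+* S)
    (hσ : ∀ x, σ (σ x) = x) (c : S) (d e : Sˣ) (he : (e : S) = σ d)
    (hc : c * σ c = (d : S) + (e : S)) :
    (!![-(d : S), 0, 0; 0, (e : S) * (↑d⁻¹ : S), 0; 0, 0, -(↑e⁻¹ : S)] :
        Matrix (Fin 3) (Fin 3) S) =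
      !![1, -c, -(d : S); 0, 1, σ c; 0, 0, 1] *
        !![1, 0, 0; σ c * (↑e⁻¹ : S), 1, 0; -(↑e⁻¹ : S), -c * (↑d⁻¹ : S), 1] *
        !![1, -c * (e : S) * (↑d⁻¹ : S), -(d : S); 0, 1, σ c * (d : S) * (↑e⁻¹ : S); 0, 0, 1] *
        !![0, 0, 1; 0, -1, 0; 1, 0, 0] := by
  have hd : (d : S) * (↑d⁻¹ : S) = 1 := d.mul_inv
  have hee : (e : S) * (↑e⁻¹ : S) = 1 := e.mul_inv
  ext i j
  fin_cases i <;> fin_cases j <;>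
    simp [Matrix.mul_apply, Fin.sum_univ_succ, Matrix.vecHead, Matrix.vecTail]
  · linear_combination
      (-(↑d : S)^2*↑e⁻¹*↑d⁻¹) * hc + (-(↑d : S)^2*↑e⁻¹ - ↑d*↑e*↑e⁻¹) * hd + (-(↑d : S)) * hee
  · linear_combination (c*↑d⁻¹*↑e⁻¹*↑e : S) * hc + c * hd + (c*↑e*↑d⁻¹ : S) * hee
  · linear_combination (↑e⁻¹ : S) * hc + hee
  · linear_combination
      (σ c*↑d*↑d⁻¹*↑e⁻¹ : S) * hc + (σ c*↑d*↑e⁻¹ + σ c*↑e*↑e⁻¹ : S) * hd + σ c * hee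
  · linear_combination -(↑d⁻¹ : S) * hc - hd
  · linear_combination (↑e⁻¹*↑d*↑d⁻¹ : S) * hc + (↑e⁻¹*↑d + 1 : S) * hd + (↑d*↑d⁻¹ : S) * hee
  · linear_combination (c * ↑d⁻¹ : S) * hee
end

section
/- Let R be a commutative ring, R[[t]] the power series ring and R((t)) = R[[t]][t⁻¹] the Laurent series ring, viewed as algebras over the polynomial ring R[t]. Then the commutative square of R[t]-algebras with corners R[[t]]⊗_{R[t]}R[[t]], R[[t]], R((t))⊗_{R[t]}R((t)), R((t)) (the horizontal maps induced by the inclusion R[[t]] ⊆ R((t)), the vertical maps induced by multiplication resp. the identity) is cartesian: equivalently, if an element Σᵢ Pᵢ ⊗ Qᵢ of R((t)) ⊗_{R[t]} R((t)) satisfies Σᵢ PᵢQᵢ ∈ R[[t]] ⊆ R((t)), then it lies in the image of R[[t]] ⊗_{R[t]} R[[t]]. -/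
open TensorProduct

set_option maxHeartbeats 1000000

/-- The inclusion `R[[t]] → R((t))` as an `R[t]`-algebra homomorphism. -/
noncomputable def powerSeriesInclAlgHom (R : Type*) [CommRing R] :
    PowerSeries R →ₐ[Polynomial R] LaurentSeries R :=
  { HahnSeries.ofPowerSeries ℤ R with commutes' := fun _ => rfl }

private lemma aux_trunc_split {R : Type*} [CommRing R] (f : PowerSeries R) (m : ℕ) :
    ∃ g : PowerSeries R, f = (f.trunc m : PowerSeries R) + PowerSeries.X ^ m * g := by
  have hdvd : (PowerSeries.X : PowerSeries R) ^ m ∣ f - (f.trunc m : PowerSeries R) := by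
    rw [PowerSeries.X_pow_dvd_iff]
    intro k hk
    simp [PowerSeries.coeff_trunc, hk]
  obtain ⟨g, hg⟩ := hdvd
  exact ⟨g, by rw [← hg]; ring⟩

/-- For any Laurent series `z` there is a polynomial `p` (a power of `X`) such that `p • z` is a
power series, the action of `p` on Laurent series is surjective, and any power series splits as a
polynomial plus `p` times a power series. -/
private lemma aux_main {R : Type*} [CommRing R] (z : LaurentSeries R) :
    ∃ (p : Polynomial R) (a : PowerSeries R),
      p • z = HahnSeries.ofPowerSeries ℤ R a ∧
      (∀ w : LaurentSeries R, ∃ w', p • w' = w) ∧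
      (∀ f : PowerSeries R, ∃ (q : Polynomial R) (g : PowerSeries R),
        HahnSeries.ofPowerSeries ℤ R f
          = q • (1 : LaurentSeries R) + p • HahnSeries.ofPowerSeries ℤ R g) := by
  obtain ⟨⟨a, s⟩, h⟩ :=
    IsLocalization.surj (Submonoid.powers (PowerSeries.X : PowerSeries R)) z
  obtain ⟨n, hn⟩ := s.2
  have hn' : (PowerSeries.X : PowerSeries R) ^ n = (s : PowerSeries R) := hn
  have key : ∀ w : LaurentSeries R,
      (Polynomial.X ^ n : Polynomial R) • w = HahnSeries.single (n : ℤ) 1 * w := by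
    intro w
    rw [Algebra.smul_def, Polynomial.algebraMap_hahnSeries_apply, Polynomial.coe_pow,
      Polynomial.coe_X, HahnSeries.ofPowerSeries_X_pow]
  refine ⟨Polynomial.X ^ n, a, ?_, ?_, ?_⟩
  · rw [key, ← HahnSeries.ofPowerSeries_X_pow, hn', mul_comm]
    simpa using h
  · intro w
    refine ⟨HahnSeries.single (-(n : ℤ)) 1 * w, ?_⟩
    rw [key, ← mul_assoc, HahnSeries.single_mul_single, one_mul, add_neg_cancel,
      HahnSeries.single_zero_one, one_mul]
  · intro f
    obtain ⟨g, hg⟩ := aux_trunc_split f n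
    refine ⟨f.trunc n, g, ?_⟩
    rw [key, Algebra.smul_def, mul_one, Polynomial.algebraMap_hahnSeries_apply,
      ← HahnSeries.ofPowerSeries_X_pow, ← map_mul, ← map_add, ← hg]

/-- The push-out lemma: the commutative square of `R[t]`-algebras with corners
`R[[t]] ⊗_{R[t]} R[[t]]`, `R[[t]]`, `R((t)) ⊗_{R[t]} R((t))`, `R((t))` (horizontal maps induced
by the inclusion `R[[t]] ⊆ R((t))`, vertical maps by multiplication resp. the identity) is
cartesian: if an element `Σᵢ Pᵢ ⊗ Qᵢ` of `R((t)) ⊗_{R[t]} R((t))` satisfies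
`Σᵢ PᵢQᵢ ∈ R[[t]]`, then it lies in the image of `R[[t]] ⊗_{R[t]} R[[t]]`. -/
theorem powerSeries_tensor_pushout {R : Type*} [CommRing R]
    (x : LaurentSeries R ⊗[Polynomial R] LaurentSeries R)
    (hx : LinearMap.mul' (Polynomial R) (LaurentSeries R) x ∈
      Set.range (HahnSeries.ofPowerSeries ℤ R)) :
    x ∈ Set.range (TensorProduct.map (powerSeriesInclAlgHom R).toLinearMap
      (powerSeriesInclAlgHom R).toLinearMap) := by
  have hLtmul : ∀ (a b : PowerSeries R),
      TensorProduct.map (powerSeriesInclAlgHom R).toLinearMap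
        (powerSeriesInclAlgHom R).toLinearMap (a ⊗ₜ b)
      = (HahnSeries.ofPowerSeries ℤ R a) ⊗ₜ (HahnSeries.ofPowerSeries ℤ R b) :=
    fun a b => TensorProduct.map_tmul _ _ a b
  set L := TensorProduct.map (powerSeriesInclAlgHom R).toLinearMap
      (powerSeriesInclAlgHom R).toLinearMap with hL
  -- The multiplication of anything in the range of `L` is a power series.
  have lemA : ∀ z : PowerSeries R ⊗[Polynomial R] PowerSeries R,
      ∃ S : PowerSeries R, LinearMap.mul' (Polynomial R) (LaurentSeries R) (L z)
        = HahnSeries.ofPowerSeries ℤ R S := by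
    intro z
    induction z using TensorProduct.induction_on with
    | zero =>
        exact ⟨0, by
          rw [L.map_zero, (LinearMap.mul' (Polynomial R) (LaurentSeries R)).map_zero,
            RingHom.map_zero]⟩
    | tmul a b =>
        exact ⟨a * b, by rw [hLtmul, LinearMap.mul'_apply, map_mul]⟩
    | add a b ha hb =>
        obtain ⟨Sa, hSa⟩ := ha
        obtain ⟨Sb, hSb⟩ := hb
        exact ⟨Sa + Sb, by
          rw [L.map_add, (LinearMap.mul' (Polynomial R) (LaurentSeries R)).map_add, hSa, hSb,
            RingHom.map_add]⟩
  -- Every element of the big tensor product is `y ⊗ 1` plus something in the range of `L`.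
  have lemB : ∀ z : LaurentSeries R ⊗[Polynomial R] LaurentSeries R,
      ∃ (y : LaurentSeries R) (w : PowerSeries R ⊗[Polynomial R] PowerSeries R),
        z = y ⊗ₜ (1 : LaurentSeries R) + L w := by
    intro z
    induction z using TensorProduct.induction_on with
    | zero => exact ⟨0, 0, by rw [L.map_zero, TensorProduct.zero_tmul, add_zero]⟩
    | tmul P Q =>
        obtain ⟨p, Q', hQ', hsurj, -⟩ := aux_main Q
        obtain ⟨P₂, hP₂⟩ := hsurj P
        obtain ⟨p', P', hP', -, hsplit⟩ := aux_main P₂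
        obtain ⟨q, g, hqg⟩ := hsplit Q'
        refine ⟨q • P₂, P' ⊗ₜ g, ?_⟩
        calc P ⊗ₜ[Polynomial R] Q = (p • P₂) ⊗ₜ Q := by rw [hP₂]
          _ = P₂ ⊗ₜ (p • Q) := smul_tmul p P₂ Q
          _ = P₂ ⊗ₜ (HahnSeries.ofPowerSeries ℤ R Q') := by rw [hQ']
          _ = P₂ ⊗ₜ (q • (1 : LaurentSeries R))
              + P₂ ⊗ₜ (p' • HahnSeries.ofPowerSeries ℤ R g) := by rw [hqg, tmul_add]
          _ = (q • P₂) ⊗ₜ (1 : LaurentSeries R)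
              + (p' • P₂) ⊗ₜ (HahnSeries.ofPowerSeries ℤ R g) := by
                rw [smul_tmul q P₂ (1 : LaurentSeries R),
                  smul_tmul p' P₂ (HahnSeries.ofPowerSeries ℤ R g)]
          _ = (q • P₂) ⊗ₜ (1 : LaurentSeries R) + L (P' ⊗ₜ g) := by rw [hP', hLtmul]
    | add a b ha hb =>
        obtain ⟨ya, wa, hya⟩ := ha
        obtain ⟨yb, wb, hyb⟩ := hb
        refine ⟨ya + yb, wa + wb, ?_⟩
        rw [hya, hyb, add_tmul, L.map_add]
        abel
  obtain ⟨y, w, hw⟩ := lemB x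
  obtain ⟨S, hS⟩ := hx
  obtain ⟨T, hT⟩ := lemA w
  have hy : y = HahnSeries.ofPowerSeries ℤ R (S - T) := by
    have h1 : LinearMap.mul' (Polynomial R) (LaurentSeries R) x
        = y + HahnSeries.ofPowerSeries ℤ R T := by
      rw [hw, (LinearMap.mul' (Polynomial R) (LaurentSeries R)).map_add,
        LinearMap.mul'_apply, mul_one, hT]
    rw [RingHom.map_sub, hS, h1]
    abel
  refine ⟨(S - T) ⊗ₜ (1 : PowerSeries R) + w, ?_⟩
  rw [L.map_add, hw, hLtmul, hy]
  congr 2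
  exact map_one (HahnSeries.ofPowerSeries ℤ R)
end
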